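/- arXiv:2101.10592 — 2 statements merged into one kernel-verified Lean document; each statement's English description precedes it below -/
import Mathlib

section
/- For every z = (a, t) with a = (a₁,…,aₙ) a nonempty tuple and every x, y ∈ X: ‖ω(xz) − ω(z)‖₁ ≤ 2|z|₀ + 1 + |x|_X and ‖ω(zy) − ω(z)‖₁ ≤ 2|z|₀ + 1 + |y|_X, where xz := ((x, a₁,…,aₙ), t) is obtained by prepending the letter x and zy := ((a₁,…,aₙ, t·y), t) is obtained by appending the letter t·y. -/
/-- The ℓ¹-norm of a finitely supported real-valued function. -/
def l1Norm {X : Type*} (φ : X →₀ ℝ) : ℝ := ∑ x ∈ φ.support, |φ x|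

/-- `ω(z)` for `z = (x, g)` with `x = (x₁,…,xₘ)` a tuple in `X` and `g ∈ Γ`:
`ω(z) = Σᵢ (m + min{|xᵢ|_X, |g⁻¹·xᵢ|_X})·δ_{xᵢ}`. -/
noncomputable def omegaTuple {X Γ : Type*} [Group Γ] [MulAction Γ X] (nX : X → ℝ)
    {m : ℕ} (x : Fin m → X) (g : Γ) : X →₀ ℝ :=
  ∑ i, Finsupp.single (x i) ((m : ℝ) + min (nX (x i)) (nX (g⁻¹ • x i)))

lemma l1Norm_eq_sum {X : Type*} (φ : X →₀ ℝ) {s : Finset X} (hs : φ.support ⊆ s) :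
    l1Norm φ = ∑ x ∈ s, |φ x| := by
  rw [l1Norm]
  exact Finset.sum_subset hs (fun x _ hx => by
    simp [Finsupp.notMem_support_iff.mp hx])

lemma l1Norm_add_le {X : Type*} (φ ψ : X →₀ ℝ) :
    l1Norm (φ + ψ) ≤ l1Norm φ + l1Norm ψ := by
  classical
  rw [l1Norm_eq_sum (φ + ψ) Finsupp.support_add,
      l1Norm_eq_sum φ Finset.subset_union_left,
      l1Norm_eq_sum ψ Finset.subset_union_right, ← Finset.sum_add_distrib]
  exact Finset.sum_le_sum fun z _ => by simpa using abs_add_le (φ z) (ψ z)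

lemma l1Norm_sum_le {X ι : Type*} (s : Finset ι) (f : ι → X →₀ ℝ) :
    l1Norm (∑ i ∈ s, f i) ≤ ∑ i ∈ s, l1Norm (f i) := by
  induction s using Finset.cons_induction with
  | empty => simp [l1Norm]
  | cons a s ha ih =>
    rw [Finset.sum_cons, Finset.sum_cons]
    exact (l1Norm_add_le _ _).trans (by linarith)

lemma l1Norm_single_le {X : Type*} (a : X) (c : ℝ) :
    l1Norm (Finsupp.single a c) ≤ |c| := by
  rw [l1Norm_eq_sum _ Finsupp.support_single_subset]
  simp

/-- `‖ω(xz) − ω(z)‖₁ ≤ 2|z|₀ + 1 + |x|_X` (prepending the letter `x`) and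
`‖ω(zy) − ω(z)‖₁ ≤ 2|z|₀ + 1 + |y|_X` (appending the letter `t·y`). -/
theorem omega_creation_estimates {X Γ : Type*} [Group Γ] [MulAction Γ X]
    (nX : X → ℝ) (nG : Γ → ℝ)
    (hX0 : ∀ x, 0 ≤ nX x) (hG0 : ∀ g, 0 ≤ nG g)
    (hcompat : ∀ (g : Γ) (x : X), nX (g • x) ≤ nG g + nX x)
    (hsymm : ∀ g : Γ, nG g⁻¹ = nG g)
    (n : ℕ) (a : Fin (n + 1) → X) (t : Γ) (x y : X) :
    l1Norm (omegaTuple nX (Fin.cons x a) t - omegaTuple nX a t) ≤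
        2 * ((n : ℝ) + 1) + 1 + nX x ∧
    l1Norm (omegaTuple nX (Fin.snoc a (t • y)) t - omegaTuple nX a t) ≤
        2 * ((n : ℝ) + 1) + 1 + nX y := by
  have hones : ∀ b : Fin (n+1) → X,
      l1Norm (∑ i : Fin (n+1), Finsupp.single (b i) (1 : ℝ)) ≤ (n : ℝ) + 1 := by
    intro b
    calc l1Norm (∑ i : Fin (n+1), Finsupp.single (b i) (1 : ℝ))
        ≤ ∑ i : Fin (n+1), l1Norm (Finsupp.single (b i) (1 : ℝ)) :=
          l1Norm_sum_le _ _
      _ ≤ ∑ _i : Fin (n+1), (1 : ℝ) :=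
          Finset.sum_le_sum fun i _ => (l1Norm_single_le _ _).trans (by norm_num)
      _ = (n : ℝ) + 1 := by simp
  constructor
  · have key : omegaTuple nX (Fin.cons x a) t - omegaTuple nX a t
        = Finsupp.single x (((n : ℝ) + 2) + min (nX x) (nX (t⁻¹ • x)))
          + ∑ i : Fin (n+1), Finsupp.single (a i) (1 : ℝ) := by
      unfold omegaTuple
      rw [Fin.sum_univ_succ]
      simp only [Fin.cons_zero, Fin.cons_succ]
      rw [add_sub_assoc, ← Finset.sum_sub_distrib]
      congr 1
      · congr 1; push_cast; ring
      · refine Finset.sum_congr rfl fun i _ => ?_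
        rw [← Finsupp.single_sub]
        congr 1
        push_cast; ring
    rw [key]
    have h1 := l1Norm_add_le (Finsupp.single x (((n : ℝ) + 2) + min (nX x) (nX (t⁻¹ • x))))
      (∑ i : Fin (n+1), Finsupp.single (a i) (1 : ℝ))
    have h2 := l1Norm_single_le x (((n : ℝ) + 2) + min (nX x) (nX (t⁻¹ • x)))
    have h3 := hones a
    have hm : min (nX x) (nX (t⁻¹ • x)) ≤ nX x := min_le_left _ _
    have hm0 : 0 ≤ min (nX x) (nX (t⁻¹ • x)) := le_min (hX0 _) (hX0 _)
    have habs : |((n : ℝ) + 2) + min (nX x) (nX (t⁻¹ • x))|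
        = ((n : ℝ) + 2) + min (nX x) (nX (t⁻¹ • x)) := by
      apply abs_of_nonneg; positivity
    rw [habs] at h2
    linarith
  · have key : omegaTuple nX (Fin.snoc a (t • y)) t - omegaTuple nX a t
        = (∑ i : Fin (n+1), Finsupp.single (a i) (1 : ℝ))
          + Finsupp.single (t • y) (((n : ℝ) + 2) + min (nX (t • y)) (nX y)) := by
      unfold omegaTuple
      rw [Fin.sum_univ_castSucc]
      simp only [Fin.snoc_castSucc, Fin.snoc_last, inv_smul_smul]
      rw [add_sub_right_comm, ← Finset.sum_sub_distrib]
      congr 1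
      · refine Finset.sum_congr rfl fun i _ => ?_
        rw [← Finsupp.single_sub]
        congr 1
        push_cast; ring
      · congr 1; push_cast; ring
    rw [key]
    have h1 := l1Norm_add_le (∑ i : Fin (n+1), Finsupp.single (a i) (1 : ℝ))
      (Finsupp.single (t • y) (((n : ℝ) + 2) + min (nX (t • y)) (nX y)))
    have h2 := l1Norm_single_le (t • y) (((n : ℝ) + 2) + min (nX (t • y)) (nX y))
    have h3 := hones a
    have hm : min (nX (t • y)) (nX y) ≤ nX y := min_le_right _ _
    have hm0 : 0 ≤ min (nX (t • y)) (nX y) := le_min (hX0 _) (hX0 _)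
    have habs : |((n : ℝ) + 2) + min (nX (t • y)) (nX y)|
        = ((n : ℝ) + 2) + min (nX (t • y)) (nX y) := by
      apply abs_of_nonneg; positivity
    rw [habs] at h2
    linarith
end

section
/- Assume moreover that {i ∈ ℐ : |i|_ℐ ≤ R} is finite for every R > 0. Then for every ε > 0 there exists R > 0 such that every (y, g) ∈ Δ_ℐ^free × Γ with |(y, g)|_free > R satisfies |supp(y)| ≤ ε·|(y, g)|_free, where |supp(y)| denotes the cardinality of supp(y). In other words, |supp(y)| / |(y, g)|_free → 0 as |(y, g)|_free → ∞. -/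
noncomputable section

variable {ι Δ Γ : Type*} [Group Δ] [Group Γ] [MulAction Γ ι]
  [DecidableEq ι] [DecidableEq Δ]

/-- The action of `Γ` on the free product `∗_{i∈ι} Δ` permuting the factors. -/
def permHom (g : Γ) :
    Monoid.CoprodI (fun _ : ι => Δ) →* Monoid.CoprodI (fun _ : ι => Δ) :=
  Monoid.CoprodI.lift fun i => Monoid.CoprodI.of (M := fun _ : ι => Δ) (i := g • i)

/-- The reduced word of an element of the free product, as a list of letters. -/
def wordList (y : Monoid.CoprodI (fun _ : ι => Δ)) : List (Σ _ : ι, Δ) :=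
  (Monoid.CoprodI.Word.equiv y).toList

/-- The support `supp(y) ⊆ ι` of an element of the free product. -/
def freeSupp (y : Monoid.CoprodI (fun _ : ι => Δ)) : Finset ι :=
  ((wordList y).map Sigma.fst).toFinset

/-- `a(y) := Σₖ |y_{iₖ}|_Δ·δ_{iₖ}`. -/
def aFn (nD : Δ → ℝ) (y : Monoid.CoprodI (fun _ : ι => Δ)) : ι →₀ ℝ :=
  ((wordList y).map fun p => Finsupp.single p.1 (nD p.2)).sum

/-- `m(y, g) := Σ_{i ∈ supp(y)} min{|i|_ι, |g⁻¹·i|_ι}·δ_i`. -/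
def mFn (nI : ι → ℝ) (y : Monoid.CoprodI (fun _ : ι => Δ)) (g : Γ) : ι →₀ ℝ :=
  ∑ i ∈ freeSupp y, Finsupp.single i (min (nI i) (nI (g⁻¹ • i)))

/-- `ω(y, g) := m(y, g) + a(y)`. -/
def omegaFree (nI : ι → ℝ) (nD : Δ → ℝ)
    (y : Monoid.CoprodI (fun _ : ι => Δ)) (g : Γ) : ι →₀ ℝ :=
  mFn nI y g + aFn nD y


/-- `|(y, g)|_free := ‖ω(y, g)‖₁`. -/
def freeLen (nI : ι → ℝ) (nD : Δ → ℝ)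
    (y : Monoid.CoprodI (fun _ : ι => Δ)) (g : Γ) : ℝ :=
  l1Norm (omegaFree nI nD y g)

/-!
Every `i ∈ supp(y)` has `ω(y, g) i ≥ min {|i|, |g⁻¹•i|} + 1`. Fix `C > 0` and let `S` be the finite
set `{|i| ≤ C}`. The indices with `min {|i|, |g⁻¹•i|} ≤ C` lie in `S ∪ g•S`, so there are at most
`2|S|` of them, and each of the others contributes at least `C` to `|(y, g)|_free`. Hence
`|supp(y)| ≤ 2|S| + |(y, g)|_free / C`; with `C = 2/ε` both terms are at most `ε/2·|(y, g)|_free`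
once `|(y, g)|_free` is large.
-/

lemma sum_le_l1Norm {X : Type*} (φ : X →₀ ℝ) (s : Finset X) : ∑ x ∈ s, φ x ≤ l1Norm φ := by
  classical
  calc ∑ x ∈ s, φ x ≤ ∑ x ∈ s, |φ x| := Finset.sum_le_sum fun x _ => le_abs_self (φ x)
    _ ≤ ∑ x ∈ s ∪ φ.support, |φ x| :=
        Finset.sum_le_sum_of_subset_of_nonneg Finset.subset_union_left fun _ _ _ => abs_nonneg _
    _ = l1Norm φ :=
        (Finset.sum_subset Finset.subset_union_right fun x _ hx => by
          simp [Finsupp.notMem_support_iff.mp hx]).symm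

lemma card_filter_min_comp_smul_le {f : ι → ℝ} {C : ℝ} {S : Finset ι}
    (hS : ∀ i, f i ≤ C → i ∈ S) (g : Γ) (s : Finset ι) :
    (s.filter fun i => min (f i) (f (g⁻¹ • i)) ≤ C).card ≤ 2 * S.card := by
  have hsub : (s.filter fun i => min (f i) (f (g⁻¹ • i)) ≤ C) ⊆ S ∪ S.image (g • ·) := by
    intro i hi
    rcases min_le_iff.mp (Finset.mem_filter.mp hi).2 with h | h
    · exact Finset.mem_union_left _ (hS i h)
    · exact Finset.mem_union_right _ (Finset.mem_image.mpr ⟨g⁻¹ • i, hS _ h, smul_inv_smul g i⟩)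
  calc _ ≤ (S ∪ S.image (g • ·)).card := Finset.card_le_card hsub
    _ ≤ S.card + (S.image (g • ·)).card := Finset.card_union_le _ _
    _ ≤ 2 * S.card := by linarith [Finset.card_image_le (s := S) (f := (g • ·))]

lemma ne_one_of_mem_wordList {y : Monoid.CoprodI (fun _ : ι => Δ)} {p : Σ _ : ι, Δ}
    (hp : p ∈ wordList y) : p.2 ≠ 1 :=
  (Monoid.CoprodI.Word.equiv y).ne_one p hp

lemma aFn_apply (nD : Δ → ℝ) (y : Monoid.CoprodI (fun _ : ι => Δ)) (j : ι) :
    aFn nD y j = ((wordList y).map fun p => if p.1 = j then nD p.2 else 0).sum := by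
  simpa [List.map_map, Function.comp_def, Finsupp.single_apply, aFn] using
    map_list_sum (Finsupp.applyAddHom (M := ℝ) j)
      ((wordList y).map fun p => Finsupp.single p.1 (nD p.2))

lemma one_le_aFn {nD : Δ → ℝ} (hD1 : ∀ d : Δ, d ≠ 1 → 1 ≤ nD d)
    {y : Monoid.CoprodI (fun _ : ι => Δ)} {j : ι} (hj : j ∈ freeSupp y) :
    1 ≤ aFn nD y j := by
  obtain ⟨p, hp, rfl⟩ : ∃ p ∈ wordList y, p.1 = j := by simpa [freeSupp] using hj
  have hterm_nonneg : ∀ q ∈ wordList y, 0 ≤ if q.1 = p.1 then nD q.2 else 0 := fun q hq => by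
    split_ifs
    · exact zero_le_one.trans (hD1 _ (ne_one_of_mem_wordList hq))
    · exact le_rfl
  rw [aFn_apply]
  refine le_trans ?_
    (List.single_le_sum (List.forall_mem_map.mpr hterm_nonneg) _ (List.mem_map_of_mem hp))
  simpa using hD1 _ (ne_one_of_mem_wordList hp)

lemma mFn_apply (nI : ι → ℝ) (y : Monoid.CoprodI (fun _ : ι => Δ)) (g : Γ) (j : ι) :
    mFn nI y g j = if j ∈ freeSupp y then min (nI j) (nI (g⁻¹ • j)) else 0 := by
  rw [mFn, Finset.sum_apply']
  simp [Finsupp.single_apply]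

lemma min_add_one_le_omegaFree {nI : ι → ℝ} {nD : Δ → ℝ} (hD1 : ∀ d : Δ, d ≠ 1 → 1 ≤ nD d)
    {y : Monoid.CoprodI (fun _ : ι => Δ)} (g : Γ) {i : ι} (hi : i ∈ freeSupp y) :
    min (nI i) (nI (g⁻¹ • i)) + 1 ≤ omegaFree nI nD y g i := by
  simpa [omegaFree, mFn_apply, hi] using one_le_aFn hD1 hi

lemma card_freeSupp_le {nI : ι → ℝ} {nD : Δ → ℝ} (hD1 : ∀ d : Δ, d ≠ 1 → 1 ≤ nD d)
    {C : ℝ} (hC : 0 < C) {S : Finset ι} (hS : ∀ i, nI i ≤ C → i ∈ S)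
    (y : Monoid.CoprodI (fun _ : ι => Δ)) (g : Γ) :
    ((freeSupp y).card : ℝ) ≤ 2 * S.card + freeLen nI nD y g / C := by
  set small : ι → Prop := fun i => min (nI i) (nI (g⁻¹ • i)) ≤ C
  have hsmall : (((freeSupp y).filter small).card : ℝ) ≤ 2 * S.card := by
    exact_mod_cast card_filter_min_comp_smul_le hS g (freeSupp y)
  have hlarge : ((freeSupp y).filter (¬ small ·)).card * C ≤ freeLen nI nD y g := by
    calc ((freeSupp y).filter (¬ small ·)).card * C
        = ∑ _i ∈ (freeSupp y).filter (¬ small ·), C := by simp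
      _ ≤ ∑ i ∈ (freeSupp y).filter (¬ small ·), omegaFree nI nD y g i := by
          refine Finset.sum_le_sum fun i hi => ?_
          obtain ⟨hi, hlt⟩ := Finset.mem_filter.mp hi
          linarith [not_le.mp hlt, min_add_one_le_omegaFree (nI := nI) hD1 g hi]
      _ ≤ freeLen nI nD y g := sum_le_l1Norm _ _
  rw [← Finset.card_filter_add_card_filter_not small, Nat.cast_add]
  linarith [(le_div_iff₀ hC).mpr hlarge]

theorem card_supp_div_freeLen_tendsto_zero_general (nI : ι → ℝ) (nD : Δ → ℝ)
    (hD1 : ∀ d : Δ, d ≠ 1 → 1 ≤ nD d)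
    (hfin : ∀ R : ℝ, 0 < R → {i : ι | nI i ≤ R}.Finite)
    (ε : ℝ) (hε : 0 < ε) :
    ∃ R : ℝ, 0 < R ∧
      ∀ (y : Monoid.CoprodI (fun _ : ι => Δ)) (g : Γ),
        freeLen nI nD y g > R →
          ((freeSupp y).card : ℝ) ≤ ε * freeLen nI nD y g := by
  have hC : 0 < 2 / ε := by positivity
  set S := (hfin _ hC).toFinset
  refine ⟨4 * (S.card + 1) / ε, by positivity, fun y g hR => ?_⟩
  have hbound := card_freeSupp_le hD1 hC (S := S) (fun i hi => by simpa [S] using hi) y g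
  have hF : 4 * ((S.card : ℝ) + 1) < ε * freeLen nI nD y g := by
    rw [gt_iff_lt, div_lt_iff₀ hε] at hR
    linarith
  rw [div_div_eq_mul_div] at hbound
  linarith

/-- `|supp(y)| / |(y, g)|_free → 0` as `|(y, g)|_free → ∞`: for every `ε > 0` there exists
`R > 0` such that `|(y, g)|_free > R` implies `|supp(y)| ≤ ε·|(y, g)|_free`. -/
theorem card_supp_div_freeLen_tendsto_zero (nI : ι → ℝ) (nG : Γ → ℝ) (nD : Δ → ℝ)
    (hI0 : ∀ i, 0 ≤ nI i) (hG0 : ∀ g, 0 ≤ nG g)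
    (hcompat : ∀ (g : Γ) (i : ι), nI (g • i) ≤ nG g + nI i)
    (hsymm : ∀ g : Γ, nG g⁻¹ = nG g)
    (hDe : nD 1 = 0) (hD1 : ∀ d : Δ, d ≠ 1 → 1 ≤ nD d)
    (hfin : ∀ R : ℝ, 0 < R → {i : ι | nI i ≤ R}.Finite)
    (ε : ℝ) (hε : 0 < ε) :
    ∃ R : ℝ, 0 < R ∧
      ∀ (y : Monoid.CoprodI (fun _ : ι => Δ)) (g : Γ),
        freeLen nI nD y g > R →
          ((freeSupp y).card : ℝ) ≤ ε * freeLen nI nD y g :=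
  card_supp_div_freeLen_tendsto_zero_general nI nD hD1 hfin ε hε
end
end
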